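/- arXiv:math/0507109 — 3 statements merged into one kernel-verified Lean document; each statement's English description precedes it below -/
import Mathlib

section
/- Let H be a complex Hilbert space, A, W : H →L[ℂ] H self-adjoint continuous linear operators, f, E : ℝ → ℝ, ψ : ℝ → H, and s ∈ ℝ. Assume A(ψ t) + f(t)•W(ψ t) = E(t)•ψ(t) for all t, ‖ψ(t)‖ = 1 for all t, and that at s: f has derivative f', E has derivative E', and ψ has derivative v. Then E' = f' · Re⟪ψ(s), W(ψ s)⟫; that is, ∂_s E_q(s) = f'(s)⟨E_q(s)|W|E_q(s)⟩. -/
/-!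
Hellmann–Feynman: with `T t = A + f t • W` and `‖ψ t‖ = 1`, the eigenvalue is the expectation
`E t = ⟪ψ t, T t (ψ t)⟫`. Differentiating, the two terms in which `ψ` is differentiated add up, by
symmetry of `T s` and the eigenvalue equation, to `E s` times the derivative of `‖ψ t‖²`, which
vanishes. Only `⟪ψ s, T' (ψ s)⟫ = f' ⟪ψ s, W (ψ s)⟫` survives. The argument is carried out for the
underlying real inner product, whose value is the real part of the complex one.
-/

open scoped InnerProductSpace

section
variable {F : Type*} [NormedAddCommGroup F] [InnerProductSpace ℝ F]

theorem HasDerivAt.inner_eq_zero_of_norm_eq_const {ψ : ℝ → F} {v : F} {s c : ℝ}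
    (hψ : HasDerivAt ψ v s) (hnorm : ∀ t, ‖ψ t‖ = c) : ⟪ψ s, v⟫_ℝ = 0 := by
  have hconst : HasDerivAt (‖ψ ·‖ ^ 2) 0 s := by
    simpa only [hnorm] using hasDerivAt_const s (c ^ 2)
  simpa using hψ.norm_sq.unique hconst

theorem hasDerivAt_eigenvalue_of_isSymmetric {T : ℝ → F →L[ℝ] F} {T' : F →L[ℝ] F}
    {E : ℝ → ℝ} {ψ : ℝ → F} {v : F} {s : ℝ}
    (hT : HasDerivAt T T' s) (hψ : HasDerivAt ψ v s)
    (hsymm : (T s : F →ₗ[ℝ] F).IsSymmetric)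
    (heig : ∀ t, T t (ψ t) = E t • ψ t) (hnorm : ∀ t, ‖ψ t‖ = 1) :
    HasDerivAt E ⟪ψ s, T' (ψ s)⟫_ℝ s := by
  have hE : E = fun t => ⟪ψ t, T t (ψ t)⟫_ℝ := funext fun t => by
    rw [heig, real_inner_smul_right, real_inner_self_eq_norm_sq, hnorm, one_pow, mul_one]
  have horth : ⟪ψ s, v⟫_ℝ = 0 := hψ.inner_eq_zero_of_norm_eq_const hnorm
  have hcross : ⟪ψ s, T s v⟫_ℝ + ⟪v, T s (ψ s)⟫_ℝ = 0 := by
    rw [← ContinuousLinearMap.coe_coe, ← hsymm, ContinuousLinearMap.coe_coe, heig,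
      real_inner_smul_left, real_inner_smul_right, real_inner_comm (ψ s) v, horth, mul_zero,
      add_zero]
  have hderiv := hψ.inner ℝ (hT.clm_apply hψ)
  rw [inner_add_right, add_assoc, hcross, add_zero, ← hE] at hderiv
  exact hderiv

end

/-- The spectral flow of eigenvalues: `∂ₛE_q(s) = f'(s)⟨E_q(s)|W|E_q(s)⟩`. -/
theorem stmt6 {H : Type*} [NormedAddCommGroup H] [InnerProductSpace ℂ H] [CompleteSpace H]
    (A W : H →L[ℂ] H) (hA : IsSelfAdjoint A) (hW : IsSelfAdjoint W)
    (f E : ℝ → ℝ) (ψ : ℝ → H) (s : ℝ) (f' E' : ℝ) (v : H)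
    (heig : ∀ t, A (ψ t) + f t • W (ψ t) = E t • ψ t)
    (hnorm : ∀ t, ‖ψ t‖ = 1)
    (hf : HasDerivAt f f' s) (hE : HasDerivAt E E' s) (hψ : HasDerivAt ψ v s) :
    E' = f' * (inner ℂ (ψ s) (W (ψ s)) : ℂ).re := by
  let := InnerProductSpace.complexToReal (G := H)
  have hT : HasDerivAt (fun t => A.restrictScalars ℝ + f t • W.restrictScalars ℝ)
      (f' • W.restrictScalars ℝ) s :=
    (hf.smul_const _).const_add _
  have hsymm : ((A.restrictScalars ℝ + f s • W.restrictScalars ℝ : H →L[ℝ] H) :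
      H →ₗ[ℝ] H).IsSymmetric :=
    hA.isSymmetric.restrictScalars.add (hW.isSymmetric.restrictScalars.smul (conj_trivial _))
  rw [hE.unique (hasDerivAt_eigenvalue_of_isSymmetric hT hψ hsymm heig hnorm), smul_apply,
    real_inner_smul_right]
  rfl
end

section
/- Let H be a complex Hilbert space, A, W : H →L[ℂ] H self-adjoint continuous linear operators, f, E : ℝ → ℝ, ψ : ℝ → H, and s ∈ ℝ. Assume A(ψ t) + f(t)•W(ψ t) = E(t)•ψ(t) for all t, ‖ψ(t)‖ = 1 for all t, and that at s: f has derivative f', E has derivative E', and ψ has derivative v. Let φ ∈ H and μ ∈ ℝ satisfy A(φ) + f(s)•W(φ) = μ•φ with μ ≠ E(s). Then (E(s) − μ)·⟪φ, v⟫ = f'·⟪φ, W(ψ s)⟫; that is, for q ≠ l, (E_q − E_l)⟨E_l|∂_s|E_q⟩ = f'(s)⟨E_l|W|E_q⟩. -/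
/-!
Differentiating `A ψ(t) + f(t) W ψ(t) = E(t) ψ(t)` at `s` and pairing with `φ` gives
`⟪φ, 𝔥(s) v⟫ + f' ⟪φ, W ψ(s)⟫ = E(s) ⟪φ, v⟫ + E' ⟪φ, ψ(s)⟫`. Since `𝔥(s) = A + f(s) W` is symmetric,
`⟪φ, 𝔥(s) v⟫ = μ ⟪φ, v⟫`, and `⟪φ, ψ(s)⟫ = 0` because `φ` and `ψ(s)` are eigenvectors of `𝔥(s)`
for the distinct eigenvalues `μ` and `E(s)`.
-/

open scoped InnerProductSpace

section

variable {𝕜 V : Type*} [NontriviallyNormedField 𝕜] [NormedAlgebra ℝ 𝕜]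
  [NormedAddCommGroup V] [NormedSpace 𝕜 V] [NormedSpace ℝ V] [IsScalarTower ℝ 𝕜 V]

theorem eigen_equation_derivative {A W : V →L[𝕜] V} {f E : ℝ → ℝ} {ψ : ℝ → V}
    {s f' E' : ℝ} {v : V} (heig : ∀ t, A (ψ t) + f t • W (ψ t) = E t • ψ t)
    (hf : HasDerivAt f f' s) (hE : HasDerivAt E E' s) (hψ : HasDerivAt ψ v s) :
    A v + f s • W v + f' • W (ψ s) = E s • v + E' • ψ s := by
  have hAψ : HasDerivAt (fun t => A (ψ t)) (A v) s :=
    (A.restrictScalars ℝ).hasFDerivAt.comp_hasDerivAt s hψ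
  have hWψ : HasDerivAt (fun t => W (ψ t)) (W v) s :=
    (W.restrictScalars ℝ).hasFDerivAt.comp_hasDerivAt s hψ
  have hlhs : HasDerivAt (fun t => E t • ψ t) (A v + (f s • W v + f' • W (ψ s))) s := by
    rw [← funext heig]
    exact hAψ.add (hf.smul hWψ)
  rw [add_assoc]
  exact hlhs.unique (hE.smul hψ)

end

namespace LinearMap.IsSymmetric

variable {𝕜 H : Type*} [RCLike 𝕜] [NormedAddCommGroup H] [InnerProductSpace 𝕜 H]
  {T : H →ₗ[𝕜] H}

theorem inner_apply_eq_of_apply_eq_smul (hT : T.IsSymmetric) {φ : H} {μ : ℝ}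
    (hφ : T φ = (μ : 𝕜) • φ) (x : H) : ⟪φ, T x⟫_𝕜 = μ * ⟪φ, x⟫_𝕜 := by
  rw [← hT φ x, hφ, inner_smul_left, RCLike.conj_ofReal]

theorem inner_eq_zero_of_apply_eq_smul (hT : T.IsSymmetric) {φ ψ : H} {μ ν : ℝ}
    (hφ : T φ = (μ : 𝕜) • φ) (hψ : T ψ = (ν : 𝕜) • ψ) (hμν : μ ≠ ν) : ⟪φ, ψ⟫_𝕜 = 0 := by
  have h := hT.inner_apply_eq_of_apply_eq_smul hφ ψ
  rw [hψ, inner_smul_right] at h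
  have : ((ν : 𝕜) - μ) * ⟪φ, ψ⟫_𝕜 = 0 := by linear_combination h
  exact (mul_eq_zero.mp this).resolve_left (sub_ne_zero.mpr (by exact_mod_cast hμν.symm))

end LinearMap.IsSymmetric

theorem stmt7_general {H : Type*} [NormedAddCommGroup H] [InnerProductSpace ℂ H] [CompleteSpace H]
    (A W : H →L[ℂ] H) (hA : IsSelfAdjoint A) (hW : IsSelfAdjoint W)
    (f E : ℝ → ℝ) (ψ : ℝ → H) (s : ℝ) (f' E' : ℝ) (v : H)
    (heig : ∀ t, A (ψ t) + f t • W (ψ t) = E t • ψ t)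
    (hf : HasDerivAt f f' s) (hE : HasDerivAt E E' s) (hψ : HasDerivAt ψ v s)
    (φ : H) (μ : ℝ) (hφ : A φ + f s • W φ = μ • φ) (hμ : μ ≠ E s) :
    ((E s - μ : ℝ) : ℂ) * (inner ℂ φ v : ℂ) = (f' : ℂ) * (inner ℂ φ (W (ψ s)) : ℂ) := by
  let T : H →ₗ[ℂ] H := (A : H →ₗ[ℂ] H) + (f s : ℂ) • (W : H →ₗ[ℂ] H)
  have hT : T.IsSymmetric := hA.isSymmetric.add (hW.isSymmetric.smul (by simp))
  have hTapply (x : H) : T x = A x + f s • W x := by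
    rw [← Complex.coe_smul]; rfl
  have hTφ : T φ = (μ : ℂ) • φ := by rw [hTapply, hφ, Complex.coe_smul]
  have hTψ : T (ψ s) = (E s : ℂ) • ψ s := by rw [hTapply, heig, Complex.coe_smul]
  have horth := hT.inner_eq_zero_of_apply_eq_smul hTφ hTψ hμ
  have hderiv := eigen_equation_derivative heig hf hE hψ
  rw [← hTapply] at hderiv
  have hpair := congrArg (⟪φ, ·⟫_ℂ) hderiv
  simp only [inner_add_right, RCLike.real_smul_eq_coe_smul (K := ℂ), inner_smul_right,
    hT.inner_apply_eq_of_apply_eq_smul hTφ, horth] at hpair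
  push_cast
  linear_combination -hpair

/-- The off-diagonal components of the spectral flow:
`(E_q − E_l)⟨E_l|∂ₛ|E_q⟩ = f'(s)⟨E_l|W|E_q⟩` for `E_l ≠ E_q`. -/
theorem stmt7 {H : Type*} [NormedAddCommGroup H] [InnerProductSpace ℂ H] [CompleteSpace H]
    (A W : H →L[ℂ] H) (hA : IsSelfAdjoint A) (hW : IsSelfAdjoint W)
    (f E : ℝ → ℝ) (ψ : ℝ → H) (s : ℝ) (f' E' : ℝ) (v : H)
    (heig : ∀ t, A (ψ t) + f t • W (ψ t) = E t • ψ t)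
    (hnorm : ∀ t, ‖ψ t‖ = 1)
    (hf : HasDerivAt f f' s) (hE : HasDerivAt E E' s) (hψ : HasDerivAt ψ v s)
    (φ : H) (μ : ℝ) (hφ : A φ + f s • W φ = μ • φ) (hμ : μ ≠ E s) :
    ((E s - μ : ℝ) : ℂ) * (inner ℂ φ v : ℂ) = (f' : ℂ) * (inner ℂ φ (W (ψ s)) : ℂ) :=
  stmt7_general A W hA hW f E ψ s f' E' v heig hf hE hψ φ μ hφ hμ
end

section
/- Let H be a complex Hilbert space, A, W : H →L[ℂ] H self-adjoint continuous linear operators, f, E : ℝ → ℝ, ψ : ℝ → H, and s ∈ ℝ. Assume A(ψ t) + f(t)•W(ψ t) = E(t)•ψ(t) for all t, and that at s: f has derivative f', E has derivative E', and ψ has derivative v with ⟪ψ(s), v⟫ = 0. Let (b_l)_{l ∈ ι} be a Hilbert basis of H consisting of eigenvectors: A(b_l) + f(s)•W(b_l) = μ_l•b_l for all l, with the eigenvalue function μ : ι → ℝ injective, and suppose ψ(s) = b_q for some index q. Then v = ∑'_{l} c_l • b_l, where c_q = 0 and c_l = (f' / (μ_q − μ_l)) · ⟪b_l, W(ψ s)⟫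 for l ≠ q; that is, ∂_s|E_q⟩ = f'(s) ∑_{l ≠ q} (⟨E_l|W|E_q⟩ / (E_q − E_l)) |E_l⟩. -/
/-!
Differentiate the eigenvalue equation at `s` and pair it with the eigenvector `b l`, `l ≠ q`.
Self-adjointness of `A + f s • W` turns `⟪b l, (A + f s • W) v⟫` into `μ l ⟪b l, v⟫`, and the
`E'`-term dies since `b l ⊥ b q = ψ s`, leaving `(μ q - μ l) ⟪b l, v⟫ = f' ⟪b l, W (ψ s)⟫`.
The `q`-th coefficient vanishes by the gauge condition, and `v` is the sum of its coefficients
against the Hilbert basis.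
-/

open scoped InnerProductSpace

theorem differentiated_eigenvalue_equation {H : Type*} [NormedAddCommGroup H] [NormedSpace ℂ H]
    (A W : H →L[ℂ] H) {f E : ℝ → ℝ} {ψ : ℝ → H}
    {s f' E' : ℝ} {v : H} (heig : ∀ t, A (ψ t) + f t • W (ψ t) = E t • ψ t)
    (hf : HasDerivAt f f' s) (hE : HasDerivAt E E' s) (hψ : HasDerivAt ψ v s) :
    A v + f s • W v + f' • W (ψ s) = E s • v + E' • ψ s := by
  have hAψ : HasDerivAt (fun t => A (ψ t)) (A v) s :=
    (A.hasFDerivAt.restrictScalars ℝ).comp_hasDerivAt s hψ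
  have hWψ : HasDerivAt (fun t => W (ψ t)) (W v) s :=
    (W.hasFDerivAt.restrictScalars ℝ).comp_hasDerivAt s hψ
  have hlhs : HasDerivAt (fun t => A (ψ t) + f t • W (ψ t)) (A v + (f s • W v + f' • W (ψ s))) s :=
    hAψ.add (hf.smul hWψ)
  rw [funext heig] at hlhs
  rw [add_assoc]
  exact hlhs.unique (hE.smul hψ)

theorem LinearMap.IsSymmetric.sub_mul_inner_eq {H : Type*} [NormedAddCommGroup H]
    [InnerProductSpace ℂ H] {T : H →ₗ[ℂ] H} (hT : T.IsSymmetric)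
    {u v w x : H} {μ ν c e : ℝ} (hu : T u = μ • u) (hux : ⟪u, x⟫_ℂ = 0)
    (h : T v + c • w = ν • v + e • x) :
    ((ν : ℂ) - μ) * ⟪u, v⟫_ℂ = c * ⟪u, w⟫_ℂ := by
  have hpair := congrArg (fun y => ⟪u, y⟫_ℂ) h
  simp only [inner_add_right, ← hT u v, hu, ← Complex.coe_smul, inner_smul_left, inner_smul_right,
    hux, Complex.conj_ofReal] at hpair
  linear_combination -hpair

theorem HilbertBasis.eq_tsum_of_inner_eq {ι 𝕜 H : Type*} [RCLike 𝕜] [NormedAddCommGroup H]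
    [InnerProductSpace 𝕜 H] (b : HilbertBasis ι 𝕜 H) {v : H} {c : ι → 𝕜}
    (hc : ∀ l, ⟪b l, v⟫_𝕜 = c l) : v = ∑' l, c l • b l := by
  simpa only [b.repr_apply_apply, hc] using (b.hasSum_repr v).tsum_eq.symm

/-- Expansion of `∂ₛ|E_q⟩` in the instantaneous eigenbasis:
`∂ₛ|E_q⟩ = f'(s) ∑_{l ≠ q} (⟨E_l|W|E_q⟩ / (E_q − E_l)) |E_l⟩`. -/
theorem stmt8 {H : Type*} [NormedAddCommGroup H] [InnerProductSpace ℂ H] [CompleteSpace H]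
    {ι : Type*} [DecidableEq ι] (A W : H →L[ℂ] H) (hA : IsSelfAdjoint A) (hW : IsSelfAdjoint W)
    (f E : ℝ → ℝ) (ψ : ℝ → H) (s : ℝ) (f' E' : ℝ) (v : H)
    (heig : ∀ t, A (ψ t) + f t • W (ψ t) = E t • ψ t)
    (hf : HasDerivAt f f' s) (hE : HasDerivAt E E' s) (hψ : HasDerivAt ψ v s)
    (hgauge : (inner ℂ (ψ s) v : ℂ) = 0)
    (b : HilbertBasis ι ℂ H) (μ : ι → ℝ)
    (hb : ∀ l, A (b l) + f s • W (b l) = μ l • b l)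
    (hμ : Function.Injective μ)
    (q : ι) (hq : ψ s = b q) :
    v = ∑' l : ι,
      (if l = q then (0 : ℂ)
        else ((f' : ℂ) / ((μ q : ℂ) - (μ l : ℂ))) * (inner ℂ (b l) (W (ψ s)) : ℂ)) • b l := by
  set T : H →L[ℂ] H := A + f s • W
  have hT : (T : H →ₗ[ℂ] H).IsSymmetric := (hA.add ((IsSelfAdjoint.all (f s)).smul hW)).isSymmetric
  have hEs : E s = μ q := by
    have hbq := heig s
    rw [hq, hb q] at hbq
    exact (smul_left_injective ℝ (b.orthonormal.ne_zero q) hbq).symm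
  have hderiv : T v + f' • W (ψ s) = μ q • v + E' • b q := by
    simpa only [T, add_apply, smul_apply, hEs, hq]
      using differentiated_eigenvalue_equation A W heig hf hE hψ
  refine b.eq_tsum_of_inner_eq fun l => ?_
  split_ifs with hl
  · rw [hl, ← hq, hgauge]
  · have hgap : (μ q : ℂ) - μ l ≠ 0 := sub_ne_zero.mpr (by exact_mod_cast hμ.ne (Ne.symm hl))
    rw [div_mul_eq_mul_div, eq_div_iff hgap, mul_comm]
    exact hT.sub_mul_inner_eq (hb l) (b.orthonormal.inner_eq_zero hl) hderiv
end
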